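/- Define Θ(w) = arctan((1-w)/√(1-w²))/√(1-w²) for 0 < w < 1 and Θ(w) = artanh((w-1)/√(w²-1))/√(w²-1) for w > 1. Then Θ extends continuously to w = 1 with Θ(1) = 1/2, and Θ is continuous on (0, ∞). -/

import Mathlib

open Real

/-- The inverse hyperbolic tangent, artanh x = ½ log((1+x)/(1-x)). -/
noncomputable def artanh (x : ℝ) : ℝ := 1 / 2 * Real.log ((1 + x) / (1 - x))

/-- Θ(w): arctan branch for 0 < w < 1, value 1/2 at w = 1, artanh branch for w > 1. -/
noncomputable def Theta (w : ℝ) : ℝ :=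
  if w < 1 then arctan ((1 - w) / Real.sqrt (1 - w ^ 2)) / Real.sqrt (1 - w ^ 2)
  else if w = 1 then 1 / 2
  else _root_.artanh ((w - 1) / Real.sqrt (w ^ 2 - 1)) / Real.sqrt (w ^ 2 - 1)

/-!
Writing 1 - w² = (1 - w)(1 + w) and u = √((1 - w)/(1 + w)), the arctan branch becomes
arctan u / u / (1 + w); likewise the artanh branch is artanh v / v / (1 + w) with
v = √((w - 1)/(w + 1)). The difference quotients arctan u / u and artanh v / v extend
continuously to 0 with value 1, the derivative there. Since u = 0 for w ≥ 1 and v = 0 for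
w ≤ 1, on all of (0, ∞) the function Θ is the product of the two extended quotients divided
by 1 + w, which is visibly continuous.
-/

open Set

theorem hasDerivAt_artanh {x : ℝ} (hx : x ∈ Ioo (-1) 1) :
    HasDerivAt _root_.artanh (1 - x ^ 2)⁻¹ x := by
  obtain ⟨h₁, h₂⟩ := hx
  have hp : 1 + x ≠ 0 := by linarith
  have hm : 1 - x ≠ 0 := by linarith
  have hq : HasDerivAt (fun y => (1 + y) / (1 - y)) (2 / (1 - x) ^ 2) x :=
    (((hasDerivAt_id' x).const_add 1).div ((hasDerivAt_id' x).const_sub 1) hm).congr_deriv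
      (by ring)
  refine ((hq.log (div_ne_zero hp hm)).const_mul (1 / 2 : ℝ)).congr_deriv ?_
  rw [show 1 - x ^ 2 = (1 - x) * (1 + x) by ring]
  field_simp

theorem dslope_artanh_zero : dslope _root_.artanh 0 0 = 1 := by
  rw [dslope_same, (hasDerivAt_artanh (by norm_num : (0 : ℝ) ∈ Ioo (-1) 1)).deriv]
  norm_num

theorem continuousOn_dslope_artanh : ContinuousOn (dslope _root_.artanh 0) (Ioo (-1) 1) :=
  (continuousOn_dslope (Ioo_mem_nhds (by norm_num) (by norm_num))).2
    ⟨fun _ hx => (hasDerivAt_artanh hx).continuousAt.continuousWithinAt,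
     (hasDerivAt_artanh (by norm_num)).differentiableAt⟩

theorem dslope_arctan_zero : dslope arctan 0 0 = 1 := by
  simp [dslope_same, Real.deriv_arctan]

theorem continuous_dslope_arctan : Continuous (dslope arctan 0) := by
  rw [← continuousOn_univ, continuousOn_dslope Filter.univ_mem]
  exact ⟨continuous_arctan.continuousOn, differentiableAt_arctan 0⟩

theorem sqrt_mul_eq_sqrt_div_mul {a b : ℝ} (hb : 0 < b) : √(a * b) = √(a / b) * b := by
  rw [← sqrt_sq hb.le, ← sqrt_mul' _ (sq_nonneg b), sqrt_sq hb.le]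
  field_simp

theorem div_sqrt_mul_eq_sqrt_div {a b : ℝ} (hb : 0 < b) : a / √(a * b) = √(a / b) := by
  rw [sqrt_mul_eq_sqrt_div_mul hb, mul_comm, ← div_div, div_sqrt]

theorem apply_div_sqrt_mul_div_sqrt_mul {f : ℝ → ℝ} (hf : f 0 = 0) {a b : ℝ} (ha : 0 < a)
    (hb : 0 < b) : f (a / √(a * b)) / √(a * b) = dslope f 0 √(a / b) / b := by
  have hu : √(a / b) ≠ 0 := (sqrt_pos.2 (div_pos ha hb)).ne'
  rw [div_sqrt_mul_eq_sqrt_div hb, sqrt_mul_eq_sqrt_div_mul hb, dslope_of_ne _ hu,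
    slope_def_field, hf, sub_zero, sub_zero, div_div]

noncomputable def thetaDslope (w : ℝ) : ℝ :=
  dslope arctan 0 √((1 - w) / (1 + w)) * dslope _root_.artanh 0 √((w - 1) / (w + 1)) / (1 + w)

theorem continuousOn_thetaDslope : ContinuousOn thetaDslope (Ioi 0) := by
  have hpos : ∀ w ∈ Ioi (0 : ℝ), 1 + w ≠ 0 := fun w (hw : 0 < w) => by linarith
  have hpos' : ∀ w ∈ Ioi (0 : ℝ), w + 1 ≠ 0 := fun w (hw : 0 < w) => by linarith
  have hu : ContinuousOn (fun w : ℝ => √((1 - w) / (1 + w))) (Ioi 0) := by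
    fun_prop (disch := assumption)
  have hv : ContinuousOn (fun w : ℝ => √((w - 1) / (w + 1))) (Ioi 0) := by
    fun_prop (disch := assumption)
  have hv_mem : MapsTo (fun w : ℝ => √((w - 1) / (w + 1))) (Ioi 0) (Ioo (-1) 1) := by
    intro w (hw : 0 < w)
    refine ⟨by linarith [sqrt_nonneg ((w - 1) / (w + 1))], ?_⟩
    rw [sqrt_lt' one_pos, one_pow, div_lt_one (by linarith)]
    linarith
  exact ((continuous_dslope_arctan.comp_continuousOn hu).mul
    (continuousOn_dslope_artanh.comp hv hv_mem)).div (by fun_prop) hpos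

theorem Theta_eqOn_thetaDslope : EqOn Theta thetaDslope (Ioi 0) := by
  intro w (hw : 0 < w)
  rcases lt_trichotomy w 1 with h | rfl | h
  · have hv : √((w - 1) / (w + 1)) = 0 :=
      sqrt_eq_zero'.2 (div_nonpos_of_nonpos_of_nonneg (by linarith) (by linarith))
    rw [Theta, if_pos h, thetaDslope, hv, dslope_artanh_zero, mul_one,
      show 1 - w ^ 2 = (1 - w) * (1 + w) by ring,
      apply_div_sqrt_mul_div_sqrt_mul arctan_zero (by linarith) (by linarith)]
  · rw [Theta, if_neg (lt_irrefl 1), if_pos rfl, thetaDslope]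
    simp only [sub_self, zero_div, sqrt_zero, dslope_arctan_zero, dslope_artanh_zero]
    norm_num
  · have hu : √((1 - w) / (1 + w)) = 0 :=
      sqrt_eq_zero'.2 (div_nonpos_of_nonpos_of_nonneg (by linarith) (by linarith))
    rw [Theta, if_neg h.not_gt, if_neg h.ne', thetaDslope, hu, dslope_arctan_zero, one_mul,
      show w ^ 2 - 1 = (w - 1) * (w + 1) by ring,
      apply_div_sqrt_mul_div_sqrt_mul (by simp [_root_.artanh]) (by linarith) (by linarith),
      add_comm w]

/-- Θ extends continuously to w = 1 with Θ(1) = 1/2, and Θ is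
continuous on (0, ∞). -/
theorem stmt_19 : Theta 1 = 1 / 2 ∧ ContinuousOn Theta (Set.Ioi (0 : ℝ)) :=
  ⟨by simp [Theta], continuousOn_thetaDslope.congr Theta_eqOn_thetaDslope⟩
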